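/- The number of partitions of n all of whose successive ranks lie in {1,2} equals the number of partitions of n whose successive parts differ by at least 2 and whose smallest part is at least 2. -/

import Mathlib

/-!
Cutting the Young diagram of `π` into its `d` diagonal hooks gives the partition `angPart π` of
hook lengths; since rows and columns both shrink, consecutive hook lengths drop by at least `2`.
If every successive rank is `1` or `2`, the rank of a hook is forced by the parity of its length,
so `π` is rebuilt from its hook lengths alone (`ofHookLengths`), and a hook of positive rank has
length at least `2`. Conversely, every partition into parts `≥ 2` differing by at
least `2` is the hook-length partition of the partition `ofHookLengths` builds from it.
-/

/-- The conjugate partition: `conj π i = #{j ≥ 1 : π j ≥ i}`. -/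
noncomputable def conj (π : ℕ → ℕ) (i : ℕ) : ℕ := {j : ℕ | 1 ≤ j ∧ i ≤ π j}.ncard

/-- A partition, as a function from part indices (starting at 1) to part sizes:
nonincreasing on indices ≥ 1, eventually zero, with the unused index 0 set to 0. -/
def IsPartition (π : ℕ → ℕ) : Prop :=
  π 0 = 0 ∧ (∀ i j, 1 ≤ i → i ≤ j → π j ≤ π i) ∧ ∃ N, ∀ j, N ≤ j → π j = 0

/-- The number partitioned, i.e. the sum of all parts. -/
noncomputable def size (π : ℕ → ℕ) : ℕ := ∑' j, π j

/-- The Durfee square size: the largest `d` with `π d ≥ d`. -/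
noncomputable def durfee (π : ℕ → ℕ) : ℕ := sSup {d : ℕ | d ≤ π d}

/-- The number of parts. -/
noncomputable def len (π : ℕ → ℕ) : ℕ := conj π 1

/-- The `i`-th successive rank `r_i = π_i - π'_i`. -/
noncomputable def rank (π : ℕ → ℕ) (i : ℕ) : ℤ := (π i : ℤ) - (conj π i : ℤ)

/-- The `i`-th angle (hook) length `α_i = π_i + π'_i - 2 i + 1`, as an integer. -/
noncomputable def ang (π : ℕ → ℕ) (i : ℕ) : ℤ := (π i : ℤ) + (conj π i : ℤ) - 2 * i + 1

/-- The partition `α(π)` of angle lengths: `α_i = π_i + π'_i - 2 i + 1` for `1 ≤ i ≤ d(π)`,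
and `0` outside that range. -/
noncomputable def angPart (π : ℕ → ℕ) (i : ℕ) : ℕ :=
  if 1 ≤ i ∧ i ≤ durfee π then π i + conj π i + 1 - 2 * i else 0

open Finset

lemma AntitoneOn.le_card_filter_Icc_iff {c : ℕ → ℕ} {d i : ℕ} (hc : AntitoneOn c (Set.Icc 1 d))
    (hi : i ∈ Set.Icc 1 d) (j : ℕ) :
    i ≤ #{k ∈ Icc 1 d | j ≤ c k} ↔ j ≤ c i := by
  constructor
  · intro h
    by_contra hlt
    have hsub : {k ∈ Icc 1 d | j ≤ c k} ⊆ Icc 1 (i - 1) := by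
      intro k hk
      simp only [mem_filter, mem_Icc] at hk ⊢
      refine ⟨hk.1.1, ?_⟩
      by_contra hik
      exact hlt (hk.2.trans (hc hi hk.1 (by omega)))
    have := card_le_card hsub
    simp only [Nat.card_Icc] at this
    have := hi.1
    omega
  · intro h
    calc i = #(Icc 1 i) := by simp
      _ ≤ _ := card_le_card fun k hk => by
        simp only [mem_filter, mem_Icc] at hk ⊢
        exact ⟨⟨hk.1, hk.2.trans hi.2⟩, h.trans (hc ⟨hk.1, hk.2.trans hi.2⟩ hi hk.2)⟩

lemma conj_eq_of_forall_iff {π : ℕ → ℕ} {i m : ℕ} (h : ∀ j, 1 ≤ j → (i ≤ π j ↔ j ≤ m)) :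
    conj π i = m := by
  have hset : {j : ℕ | 1 ≤ j ∧ i ≤ π j} = Set.Icc 1 m := by
    ext j
    simp only [Set.mem_ofPred_eq, Set.mem_Icc]
    exact ⟨fun hj => ⟨hj.1, (h j hj.1).mp hj.2⟩, fun hj => ⟨hj.1, (h j hj.1).mpr hj.2⟩⟩
  rw [conj, hset, ← coe_Icc, Set.ncard_coe_finset, Nat.card_Icc, Nat.add_sub_cancel]

lemma size_eq_sum_Icc {π : ℕ → ℕ} (h0 : π 0 = 0) {N : ℕ} (hN : ∀ j, N < j → π j = 0) :
    size π = ∑ j ∈ Icc 1 N, π j :=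
  tsum_eq_sum fun j hj => by
    rcases Nat.eq_zero_or_pos j with rfl | hj0
    · exact h0
    · exact hN j (by simp only [mem_Icc, not_and, not_le] at hj; exact hj hj0)

lemma rank_mem_iff {π : ℕ → ℕ} {i : ℕ} :
    rank π i ∈ ({1, 2} : Set ℤ) ↔ π i = conj π i + 1 ∨ π i = conj π i + 2 := by
  simp only [rank, Set.mem_insert_iff, Set.mem_singleton_iff]
  omega

lemma sum_Icc_two_mul (d : ℕ) : ∑ i ∈ Icc 1 d, 2 * i = d * (d + 1) := by
  induction d with
  | zero => simp
  | succ d ih => rw [sum_Icc_succ_top (by omega), ih]; ring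

section Partition

variable {π : ℕ → ℕ}

lemma IsPartition.apply_le_apply (hπ : IsPartition π) {i j : ℕ} (hi : 1 ≤ i) (hij : i ≤ j) :
    π j ≤ π i :=
  hπ.2.1 i j hi hij

lemma IsPartition.le_apply_iff_le_conj (hπ : IsPartition π) {i j : ℕ} (hi : 1 ≤ i)
    (hj : 1 ≤ j) : i ≤ π j ↔ j ≤ conj π i := by
  obtain ⟨-, hmono, N, hN⟩ := hπ
  have hanti : AntitoneOn π (Set.Icc 1 N) := fun a ha b _ hab => hmono a b ha.1 hab
  have hconj : conj π i = #{k ∈ Icc 1 N | i ≤ π k} := by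
    rw [conj, ← Set.ncard_coe_finset]
    congr 1
    ext k
    simp only [Set.mem_ofPred_eq, coe_filter, mem_Icc]
    refine ⟨fun hk => ⟨⟨hk.1, ?_⟩, hk.2⟩, fun hk => ⟨hk.1.1, hk.2⟩⟩
    by_contra hkN
    have := hN k (by omega)
    omega
  rw [hconj]
  by_cases hjN : j ≤ N
  · exact (hanti.le_card_filter_Icc_iff ⟨hj, hjN⟩ i).symm
  · have : #{k ∈ Icc 1 N | i ≤ π k} ≤ N := (card_filter_le _ _).trans (by simp)
    rw [hN j (by omega)]
    omega

lemma IsPartition.conj_le_conj (hπ : IsPartition π) {i i' : ℕ} (hi : 1 ≤ i) (hii' : i ≤ i') :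
    conj π i' ≤ conj π i := by
  rcases Nat.eq_zero_or_pos (conj π i') with h | h
  · omega
  · have := (hπ.le_apply_iff_le_conj (hi.trans hii') h).mpr le_rfl
    exact (hπ.le_apply_iff_le_conj hi h).mp (by omega)

lemma IsPartition.apply_eq_zero_of_len_lt (hπ : IsPartition π) {j : ℕ} (hj : len π < j) :
    π j = 0 := by
  have := hπ.le_apply_iff_le_conj le_rfl (j := j) (by omega)
  rw [len] at hj
  omega

lemma IsPartition.le_durfee_iff (hπ : IsPartition π) {i : ℕ} : i ≤ durfee π ↔ i ≤ π i := by
  obtain ⟨-, hmono, N, hN⟩ := hπ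
  have hbdd : BddAbove {d : ℕ | d ≤ π d} := ⟨N, fun d hd => by
    by_contra hNd
    have := hN d (by omega)
    simp only [Set.mem_ofPred_eq] at hd
    omega⟩
  have hd : durfee π ≤ π (durfee π) := Nat.sSup_mem (s := {d : ℕ | d ≤ π d}) ⟨0, Nat.zero_le _⟩ hbdd
  refine ⟨fun h => ?_, fun h => le_csSup hbdd h⟩
  rcases Nat.eq_zero_or_pos i with rfl | hi
  · exact Nat.zero_le _
  · exact h.trans (hd.trans (hmono i _ hi h))

lemma IsPartition.durfee_eq (hπ : IsPartition π) {d : ℕ} (hd : d ≤ π d) (hd' : π (d + 1) ≤ d) :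
    durfee π = d := by
  have := hπ.le_durfee_iff (i := d)
  have := hπ.le_durfee_iff (i := d + 1)
  omega

lemma IsPartition.durfee_le_apply (hπ : IsPartition π) {i : ℕ} (hi : 1 ≤ i)
    (hid : i ≤ durfee π) : durfee π ≤ π i :=
  (hπ.le_durfee_iff.mp le_rfl).trans (hπ.apply_le_apply hi hid)

lemma IsPartition.durfee_le_conj (hπ : IsPartition π) {i : ℕ} (hi : 1 ≤ i)
    (hid : i ≤ durfee π) : durfee π ≤ conj π i :=
  (hπ.le_apply_iff_le_conj hi (hi.trans hid)).mp (hid.trans (hπ.le_durfee_iff.mp le_rfl))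

lemma IsPartition.apply_le_durfee (hπ : IsPartition π) {j : ℕ} (hj : durfee π < j) :
    π j ≤ durfee π := by
  have := hπ.le_durfee_iff (i := durfee π + 1)
  have := hπ.apply_le_apply (i := durfee π + 1) (by omega) hj
  omega

lemma IsPartition.durfee_le_len (hπ : IsPartition π) : durfee π ≤ len π := by
  rcases Nat.eq_zero_or_pos (durfee π) with h | h
  · omega
  · exact (hπ.le_apply_iff_le_conj le_rfl h).mp (h.trans_le (hπ.durfee_le_apply h le_rfl))

lemma IsPartition.apply_eq_card_filter (hπ : IsPartition π) {j : ℕ} (hj : durfee π < j) :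
    π j = #{i ∈ Icc 1 (durfee π) | j ≤ conj π i} := by
  have hπj := hπ.apply_le_durfee hj
  have : {i ∈ Icc 1 (durfee π) | j ≤ conj π i} = Icc 1 (π j) := by
    ext i
    simp only [mem_filter, mem_Icc]
    constructor
    · rintro ⟨⟨hi, -⟩, hji⟩
      exact ⟨hi, (hπ.le_apply_iff_le_conj hi (by omega)).mpr hji⟩
    · rintro ⟨hi, hij⟩
      exact ⟨⟨hi, hij.trans hπj⟩, (hπ.le_apply_iff_le_conj hi (by omega)).mp hij⟩
  rw [this, Nat.card_Icc, Nat.add_sub_cancel]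

lemma IsPartition.sum_Ioc_durfee_len (hπ : IsPartition π) :
    ∑ j ∈ Ioc (durfee π) (len π), π j = ∑ i ∈ Icc 1 (durfee π), (conj π i - durfee π) := by
  rw [sum_congr rfl fun j hj => hπ.apply_eq_card_filter (mem_Ioc.mp hj).1]
  refine (sum_card_bipartiteAbove_eq_sum_card_bipartiteBelow (fun j i => j ≤ conj π i)).trans
    (sum_congr rfl fun i hi => ?_)
  obtain ⟨hi1, hid⟩ := mem_Icc.mp hi
  have : (Ioc (durfee π) (len π)).bipartiteBelow (fun j i => j ≤ conj π i) i
      = Ioc (durfee π) (conj π i) := by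
    ext j
    have := hπ.conj_le_conj le_rfl hi1
    simp only [bipartiteBelow, mem_filter, mem_Ioc, len] at this ⊢
    omega
  rw [this, Nat.card_Ioc]

end Partition

section HookLengths

variable {π : ℕ → ℕ}

lemma angPart_zero (π : ℕ → ℕ) : angPart π 0 = 0 := by
  simp [angPart]

lemma angPart_of_durfee_lt {i : ℕ} (hi : durfee π < i) : angPart π i = 0 := by
  rw [angPart, if_neg (by omega)]

lemma IsPartition.angPart_add_two_mul (hπ : IsPartition π) {i : ℕ} (hi : 1 ≤ i)
    (hid : i ≤ durfee π) : angPart π i + 2 * i = π i + conj π i + 1 := by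
  have := hπ.durfee_le_apply hi hid
  have := hπ.durfee_le_conj hi hid
  rw [angPart, if_pos ⟨hi, hid⟩]
  omega

lemma IsPartition.angPart_succ_add_two_le (hπ : IsPartition π) {i : ℕ} (hi : 1 ≤ i)
    (hid : i + 1 ≤ durfee π) : angPart π (i + 1) + 2 ≤ angPart π i := by
  have := hπ.angPart_add_two_mul hi (by omega)
  have := hπ.angPart_add_two_mul (by omega) hid
  have := hπ.apply_le_apply hi (by omega : i ≤ i + 1)
  have := hπ.conj_le_conj hi (by omega : i ≤ i + 1)
  omega

lemma IsPartition.isPartition_angPart (hπ : IsPartition π) : IsPartition (angPart π) := by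
  refine ⟨angPart_zero π, fun i j hi hij => ?_, durfee π + 1, fun j hj => angPart_of_durfee_lt hj⟩
  rcases lt_or_ge (durfee π) j with hj | hj
  · rw [angPart_of_durfee_lt hj]
    exact Nat.zero_le _
  · have := hπ.angPart_add_two_mul hi (hij.trans hj)
    have := hπ.angPart_add_two_mul (hi.trans hij) hj
    have := hπ.apply_le_apply hi hij
    have := hπ.conj_le_conj hi hij
    omega

lemma IsPartition.len_angPart (hπ : IsPartition π) : len (angPart π) = durfee π :=
  conj_eq_of_forall_iff fun j hj => by
    constructor
    · intro h
      by_contra hjd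
      rw [angPart_of_durfee_lt (by omega)] at h
      omega
    · intro hjd
      have := hπ.angPart_add_two_mul hj hjd
      have := hπ.durfee_le_apply hj hjd
      have := hπ.durfee_le_conj hj hjd
      omega

lemma IsPartition.two_le_angPart (hπ : IsPartition π) {i : ℕ} (hi : 1 ≤ i)
    (hid : i ≤ durfee π) (hr : 0 < rank π i) : 2 ≤ angPart π i := by
  have := hπ.angPart_add_two_mul hi hid
  have := hπ.durfee_le_conj hi hid
  rw [rank] at hr
  omega

lemma IsPartition.size_angPart (hπ : IsPartition π) : size (angPart π) = size π := by
  set d := durfee π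
  have hα : size (angPart π) = ∑ i ∈ Icc 1 d, angPart π i :=
    size_eq_sum_Icc (angPart_zero π) fun j hj => angPart_of_durfee_lt hj
  -- the rows through the Durfee square, then the cells below it counted column by column
  have hπs : size π = ∑ i ∈ Icc 1 d, π i + ∑ i ∈ Icc 1 d, (conj π i - d) := by
    have hIcc (m : ℕ) : Icc 1 m = Ioc 0 m := Icc_add_one_left_eq_Ioc 0 m
    rw [size_eq_sum_Icc hπ.1 fun j => hπ.apply_eq_zero_of_len_lt, ← hπ.sum_Ioc_durfee_len,
      hIcc, hIcc, sum_Ioc_consecutive _ (Nat.zero_le d) hπ.durfee_le_len]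
  have hterm : ∑ i ∈ Icc 1 d, (angPart π i + 2 * i)
      = ∑ i ∈ Icc 1 d, (π i + (conj π i - d) + (d + 1)) :=
    sum_congr rfl fun i hi => by
      obtain ⟨hi1, hid⟩ := mem_Icc.mp hi
      have := hπ.angPart_add_two_mul hi1 hid
      have := hπ.durfee_le_conj hi1 hid
      omega
  simp only [sum_add_distrib, sum_Icc_two_mul, sum_const, Nat.card_Icc, Nat.add_sub_cancel,
    smul_eq_mul] at hterm
  rw [hα, hπs]
  linarith

end HookLengths

/-- The partition with Durfee square `d`, first `d` rows of lengths `p i` and first `d` columns of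
lengths `q i`; below the square, row `j` meets the columns `i` with `j ≤ q i`. -/
def ofDiagonalHooks (d : ℕ) (p q : ℕ → ℕ) (j : ℕ) : ℕ :=
  if j = 0 then 0 else if j ≤ d then p j else #{i ∈ Icc 1 d | j ≤ q i}

section DiagonalHooks

variable {d : ℕ} {p q : ℕ → ℕ}

lemma ofDiagonalHooks_of_le {j : ℕ} (hj : 1 ≤ j) (hjd : j ≤ d) :
    ofDiagonalHooks d p q j = p j := by
  rw [ofDiagonalHooks, if_neg (by omega), if_pos hjd]

lemma ofDiagonalHooks_of_lt {j : ℕ} (hj : d < j) :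
    ofDiagonalHooks d p q j = #{i ∈ Icc 1 d | j ≤ q i} := by
  rw [ofDiagonalHooks, if_neg (by omega), if_neg (by omega)]

lemma ofDiagonalHooks_le_of_lt {j : ℕ} (hj : d < j) : ofDiagonalHooks d p q j ≤ d := by
  rw [ofDiagonalHooks_of_lt hj]
  exact (card_filter_le _ _).trans (by simp)

lemma ofDiagonalHooks_congr {p' q' : ℕ → ℕ} (hp : Set.EqOn p p' (Set.Icc 1 d))
    (hq : Set.EqOn q q' (Set.Icc 1 d)) : ofDiagonalHooks d p q = ofDiagonalHooks d p' q' := by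
  funext j
  unfold ofDiagonalHooks
  split_ifs with hj0 hjd
  · rfl
  · exact hp ⟨by omega, hjd⟩
  · rw [filter_congr fun i hi => by rw [hq (mem_Icc.mp hi)]]

lemma IsPartition.ofDiagonalHooks_durfee_conj {π : ℕ → ℕ} (hπ : IsPartition π) :
    ofDiagonalHooks (durfee π) π (conj π) = π := by
  funext j
  unfold ofDiagonalHooks
  split_ifs with hj0 hjd
  · rw [hj0, hπ.1]
  · rfl
  · exact (hπ.apply_eq_card_filter (by omega)).symm

lemma isPartition_ofDiagonalHooks (hp : AntitoneOn p (Set.Icc 1 d)) (hpd : d ≤ p d) :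
    IsPartition (ofDiagonalHooks d p q) := by
  refine ⟨if_pos rfl, fun i j hi hij => ?_, (Icc 1 d).sup q + d + 1, fun j hj => ?_⟩
  · rcases le_or_gt j d with hjd | hjd
    · rw [ofDiagonalHooks_of_le hi (hij.trans hjd), ofDiagonalHooks_of_le (hi.trans hij) hjd]
      exact hp ⟨hi, hij.trans hjd⟩ ⟨hi.trans hij, hjd⟩ hij
    · rcases le_or_gt i d with hid | hid
      · rw [ofDiagonalHooks_of_le hi hid]
        calc ofDiagonalHooks d p q j ≤ d := ofDiagonalHooks_le_of_lt hjd
          _ ≤ p d := hpd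
          _ ≤ p i := hp ⟨hi, hid⟩ ⟨hi.trans hid, le_rfl⟩ hid
      · rw [ofDiagonalHooks_of_lt hid, ofDiagonalHooks_of_lt hjd]
        exact card_le_card (monotone_filter_right _ fun k _ hk => hij.trans hk)
  · rw [ofDiagonalHooks_of_lt (by omega), card_eq_zero, filter_eq_empty_iff]
    intro i hi
    have := le_sup (f := q) hi
    omega

lemma durfee_ofDiagonalHooks (hp : AntitoneOn p (Set.Icc 1 d)) (hpd : d ≤ p d) :
    durfee (ofDiagonalHooks d p q) = d := by
  refine (isPartition_ofDiagonalHooks hp hpd).durfee_eq ?_ (ofDiagonalHooks_le_of_lt (by omega))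
  rcases Nat.eq_zero_or_pos d with hd | hd
  · omega
  · rwa [ofDiagonalHooks_of_le hd le_rfl]

lemma conj_ofDiagonalHooks (hp : AntitoneOn p (Set.Icc 1 d)) (hq : AntitoneOn q (Set.Icc 1 d))
    (hpd : d ≤ p d) (hqd : d ≤ q d) {i : ℕ} (hi : i ∈ Set.Icc 1 d) :
    conj (ofDiagonalHooks d p q) i = q i :=
  conj_eq_of_forall_iff fun j hj => by
    rcases le_or_gt j d with hjd | hjd
    · have hpj := hp ⟨hj, hjd⟩ ⟨hj.trans hjd, le_rfl⟩ hjd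
      have hqi := hq hi ⟨hi.1.trans hi.2, le_rfl⟩ hi.2
      rw [ofDiagonalHooks_of_le hj hjd]
      have := hi.2
      omega
    · rw [ofDiagonalHooks_of_lt hjd]
      exact hq.le_card_filter_Icc_iff hi j

end DiagonalHooks

/-- A diagonal hook of length `a` whose rank is `1` or `2` has its rank fixed by the parity of `a`:
its row has length `⌈a / 2⌉ + i` and its column `⌊a / 2⌋ + i - 1`. -/
noncomputable def ofHookLengths (α : ℕ → ℕ) : ℕ → ℕ :=
  ofDiagonalHooks (len α) (fun i => (α i + 1) / 2 + i) (fun i => α i / 2 + i - 1)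

section OfHookLengths

variable {α : ℕ → ℕ}

lemma IsPartition.ofHookLengths_angPart {π : ℕ → ℕ} (hπ : IsPartition π)
    (hr : ∀ i, 1 ≤ i → i ≤ durfee π → rank π i ∈ ({1, 2} : Set ℤ)) :
    ofHookLengths (angPart π) = π := by
  rw [ofHookLengths, hπ.len_angPart]
  conv_rhs => rw [← hπ.ofDiagonalHooks_durfee_conj]
  apply ofDiagonalHooks_congr <;>
  · intro i hi
    have := hπ.angPart_add_two_mul hi.1 hi.2
    have := rank_mem_iff.mp (hr i hi.1 hi.2)
    dsimp only
    omega

lemma antitoneOn_ceil_half_add (hgap : ∀ i, 1 ≤ i → i + 1 ≤ len α → α (i + 1) + 2 ≤ α i) :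
    AntitoneOn (fun i => (α i + 1) / 2 + i) (Set.Icc 1 (len α)) :=
  antitoneOn_of_add_one_le Set.ordConnected_Icc fun i _ hi hi' => by
    have := hgap i hi.1 hi'.2
    omega

lemma antitoneOn_floor_half_add_sub_one
    (hgap : ∀ i, 1 ≤ i → i + 1 ≤ len α → α (i + 1) + 2 ≤ α i) :
    AntitoneOn (fun i => α i / 2 + i - 1) (Set.Icc 1 (len α)) :=
  antitoneOn_of_add_one_le Set.ordConnected_Icc fun i _ hi hi' => by
    have := hgap i hi.1 hi'.2
    omega

lemma ofHookLengths_of_le {i : ℕ} (hi : 1 ≤ i) (hid : i ≤ len α) :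
    ofHookLengths α i = (α i + 1) / 2 + i :=
  ofDiagonalHooks_of_le hi hid

lemma isPartition_ofHookLengths (hgap : ∀ i, 1 ≤ i → i + 1 ≤ len α → α (i + 1) + 2 ≤ α i) :
    IsPartition (ofHookLengths α) :=
  isPartition_ofDiagonalHooks (antitoneOn_ceil_half_add hgap) (by omega)

lemma durfee_ofHookLengths (hgap : ∀ i, 1 ≤ i → i + 1 ≤ len α → α (i + 1) + 2 ≤ α i) :
    durfee (ofHookLengths α) = len α :=
  durfee_ofDiagonalHooks (antitoneOn_ceil_half_add hgap) (by omega)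

lemma conj_ofHookLengths (hgap : ∀ i, 1 ≤ i → i + 1 ≤ len α → α (i + 1) + 2 ≤ α i)
    (hmin : ∀ i, 1 ≤ i → i ≤ len α → 2 ≤ α i) {i : ℕ} (hi : i ∈ Set.Icc 1 (len α)) :
    conj (ofHookLengths α) i = α i / 2 + i - 1 := by
  refine conj_ofDiagonalHooks (antitoneOn_ceil_half_add hgap)
    (antitoneOn_floor_half_add_sub_one hgap) (by omega) ?_ hi
  have := hmin _ (hi.1.trans hi.2) le_rfl
  omega

lemma rank_ofHookLengths_mem (hgap : ∀ i, 1 ≤ i → i + 1 ≤ len α → α (i + 1) + 2 ≤ α i)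
    (hmin : ∀ i, 1 ≤ i → i ≤ len α → 2 ≤ α i) {i : ℕ} (hi : 1 ≤ i)
    (hid : i ≤ durfee (ofHookLengths α)) : rank (ofHookLengths α) i ∈ ({1, 2} : Set ℤ) := by
  rw [durfee_ofHookLengths hgap] at hid
  rw [rank_mem_iff, conj_ofHookLengths hgap hmin ⟨hi, hid⟩, ofHookLengths_of_le hi hid]
  omega

lemma IsPartition.angPart_ofHookLengths (hα : IsPartition α)
    (hgap : ∀ i, 1 ≤ i → i + 1 ≤ len α → α (i + 1) + 2 ≤ α i)
    (hmin : ∀ i, 1 ≤ i → i ≤ len α → 2 ≤ α i) : angPart (ofHookLengths α) = α := by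
  have hdurfee := durfee_ofHookLengths hgap
  funext i
  rcases Nat.eq_zero_or_pos i with rfl | hi
  · rw [angPart_zero, hα.1]
  rcases le_or_gt i (len α) with hid | hid
  · have := (isPartition_ofHookLengths hgap).angPart_add_two_mul hi (hdurfee ▸ hid)
    rw [conj_ofHookLengths hgap hmin ⟨hi, hid⟩, ofHookLengths_of_le hi hid] at this
    omega
  · rw [angPart_of_durfee_lt (hdurfee ▸ hid), hα.apply_eq_zero_of_len_lt hid]

end OfHookLengths

theorem stmt8 (n : ℕ) :
    {π | IsPartition π ∧ size π = n ∧
        ∀ i, 1 ≤ i → i ≤ durfee π → rank π i ∈ ({1, 2} : Set ℤ)}.ncard =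
    {α | IsPartition α ∧ size α = n ∧
        (∀ i, 1 ≤ i → i + 1 ≤ len α → α (i + 1) + 2 ≤ α i) ∧ (∀ i, 1 ≤ i → i ≤ len α → 2 ≤ α i)}.ncard := by
  refine Set.ncard_congr (fun π _ => angPart π) ?_ ?_ ?_
  · rintro π ⟨hπ, rfl, hr⟩
    refine ⟨hπ.isPartition_angPart, hπ.size_angPart, fun i hi hid => ?_, fun i hi hid => ?_⟩
    · exact hπ.angPart_succ_add_two_le hi (hπ.len_angPart ▸ hid)
    · rw [hπ.len_angPart] at hid
      have := rank_mem_iff.mp (hr i hi hid)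
      exact hπ.two_le_angPart hi hid (by rw [rank]; omega)
  · rintro π σ ⟨hπ, -, hπr⟩ ⟨hσ, -, hσr⟩ h
    rw [← hπ.ofHookLengths_angPart hπr, h, hσ.ofHookLengths_angPart hσr]
  · rintro α ⟨hα, rfl, hgap, hmin⟩
    have hpart := isPartition_ofHookLengths hgap
    refine ⟨ofHookLengths α, ⟨hpart, ?_, fun i => rank_ofHookLengths_mem hgap hmin⟩,
      hα.angPart_ofHookLengths hgap hmin⟩
    rw [← hpart.size_angPart, hα.angPart_ofHookLengths hgap hmin]
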